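/- For each K > 0, the sublevel set {x ∈ Ω_σ : U(x) + I(x) ≤ K} is compact, where Ω_σ = {x ∈ ℝ^N : r_{σ(1)} < ... < r_{σ(N)}}. That is, W = U + I is a proper function on each Ω_σ. -/
import Mathlib

open Finset

noncomputable def Upot {N : ℕ} (m : Fin N → ℝ) (x : Fin N → ℝ) : ℝ :=
  ∑ i, ∑ j ∈ Finset.Ioi i, m i * m j / |x i - x j|

noncomputable def inertia {N : ℕ} (m : Fin N → ℝ) (x : Fin N → ℝ) : ℝ :=
  ∑ i, m i * x i ^ 2

lemma Upot_nonneg {N : ℕ} (m : Fin N → ℝ) (hm : ∀ i, 0 < m i) (x : Fin N → ℝ) :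
    0 ≤ Upot m x := by
  apply Finset.sum_nonneg; intro i _
  apply Finset.sum_nonneg; intro j _
  exact div_nonneg (mul_nonneg (hm i).le (hm j).le) (abs_nonneg _)

lemma inertia_nonneg {N : ℕ} (m : Fin N → ℝ) (hm : ∀ i, 0 < m i) (x : Fin N → ℝ) :
    0 ≤ inertia m x := by
  apply Finset.sum_nonneg; intro i _
  exact mul_nonneg (hm i).le (sq_nonneg _)

lemma term_le_Upot {N : ℕ} (m : Fin N → ℝ) (hm : ∀ i, 0 < m i) (x : Fin N → ℝ)
    {i j : Fin N} (hij : i < j) : m i * m j / |x i - x j| ≤ Upot m x := by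
  have h1 : m i * m j / |x i - x j| ≤ ∑ b ∈ Finset.Ioi i, m i * m b / |x i - x b| := by
    apply Finset.single_le_sum (f := fun b => m i * m b / |x i - x b|)
    · intro b _
      exact div_nonneg (mul_nonneg (hm i).le (hm b).le) (abs_nonneg _)
    · simpa using hij
  refine h1.trans ?_
  apply Finset.single_le_sum (f := fun a => ∑ b ∈ Finset.Ioi a, m a * m b / |x a - x b|)
  · intro a _
    apply Finset.sum_nonneg; intro b _
    exact div_nonneg (mul_nonneg (hm a).le (hm b).le) (abs_nonneg _)
  · simp

lemma term_le_Upot' {N : ℕ} (m : Fin N → ℝ) (hm : ∀ i, 0 < m i) (x : Fin N → ℝ)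
    {i j : Fin N} (hij : i ≠ j) : m i * m j / |x i - x j| ≤ Upot m x := by
  rcases hij.lt_or_gt with h | h
  · exact term_le_Upot m hm x h
  · rw [mul_comm, abs_sub_comm]
    exact term_le_Upot m hm x h

/-- `W = U + I` is proper on each component `Ω_σ`: its sublevel sets are compact. -/
theorem sublevel_compact {N : ℕ} (m : Fin N → ℝ) (hm : ∀ i, 0 < m i)
    (σ : Equiv.Perm (Fin N)) (K : ℝ) (hK : 0 < K) :
    IsCompact {x : Fin N → ℝ | StrictMono (x ∘ σ) ∧ Upot m x + inertia m x ≤ K} := by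
  set S := {x : Fin N → ℝ | StrictMono (x ∘ σ) ∧ Upot m x + inertia m x ≤ K} with hS
  set C := {x : Fin N → ℝ | (∀ i j : Fin N, i ≤ j → x (σ i) ≤ x (σ j)) ∧
      (∀ i j : Fin N, i ≠ j → m i * m j / K ≤ |x i - x j|)} with hC
  -- C is closed
  have hCclosed : IsClosed C := by
    have : C = (⋂ i, ⋂ j, {x : Fin N → ℝ | i ≤ j → x (σ i) ≤ x (σ j)}) ∩
        (⋂ i, ⋂ j, {x : Fin N → ℝ | i ≠ j → m i * m j / K ≤ |x i - x j|}) := by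
      ext x
      simp only [hC, Set.mem_setOf_eq, Set.mem_inter_iff, Set.mem_iInter]
      
    rw [this]
    apply IsClosed.inter
    · apply isClosed_iInter; intro i; apply isClosed_iInter; intro j
      by_cases h : i ≤ j
      · have : {x : Fin N → ℝ | i ≤ j → x (σ i) ≤ x (σ j)}
            = {x : Fin N → ℝ | x (σ i) ≤ x (σ j)} := by ext x; simp [h]
        rw [this]
        exact isClosed_le (continuous_apply _) (continuous_apply _)
      · have : {x : Fin N → ℝ | i ≤ j → x (σ i) ≤ x (σ j)} = Set.univ := by
          ext x; simp [h]
        rw [this]; exact isClosed_univ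
    · apply isClosed_iInter; intro i; apply isClosed_iInter; intro j
      by_cases h : i ≠ j
      · have : {x : Fin N → ℝ | i ≠ j → m i * m j / K ≤ |x i - x j|}
            = {x : Fin N → ℝ | m i * m j / K ≤ |x i - x j|} := by ext x; simp [h]
        rw [this]
        exact isClosed_le continuous_const (((continuous_apply i).sub (continuous_apply j)).abs)
      · have : {x : Fin N → ℝ | i ≠ j → m i * m j / K ≤ |x i - x j|} = Set.univ := by
          ext x; simp at h; simp [h]
        rw [this]; exact isClosed_univ
  -- Upot + inertia is continuous on C
  have hcont : ContinuousOn (fun x => Upot m x + inertia m x) C := by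
    apply ContinuousOn.add
    · unfold Upot
      apply continuousOn_finset_sum; intro i _
      apply continuousOn_finset_sum; intro j hj
      have hij : i ≠ j := (Finset.mem_Ioi.mp hj).ne'.symm
      apply ContinuousOn.div continuousOn_const
      · exact (((continuous_apply i).sub (continuous_apply j)).abs).continuousOn
      · intro x hx
        have h1 := hx.2 i j hij
        have h2 : 0 < m i * m j / K := div_pos (mul_pos (hm i) (hm j)) hK
        exact ne_of_gt (lt_of_lt_of_le h2 h1)
    · exact (continuous_finset_sum _ fun i _ =>
        (continuous_const.mul ((continuous_apply i).pow 2))).continuousOn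
  -- S = C ∩ preimage
  have hSeq : S = C ∩ (fun x => Upot m x + inertia m x) ⁻¹' Set.Iic K := by
    ext x
    simp only [hS, hC, Set.mem_setOf_eq, Set.mem_inter_iff, Set.mem_preimage, Set.mem_Iic]
    constructor
    · rintro ⟨hmono, hle⟩
      have hUle : Upot m x ≤ K := by
        have := inertia_nonneg m hm x; linarith
      have hxinj : Function.Injective x := by
        have h1 : Function.Injective (x ∘ σ) := hmono.injective
        intro a b hab
        have : (x ∘ σ) (σ.symm a) = (x ∘ σ) (σ.symm b) := by
          simp [hab]
        have := h1 this
        simpa using congrArg σ this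
      refine ⟨⟨fun i j hij => hmono.monotone hij, fun i j hij => ?_⟩, hle⟩
      have hne : x i ≠ x j := fun h => hij (hxinj h)
      have habs : 0 < |x i - x j| := abs_pos.mpr (sub_ne_zero.mpr hne)
      have hterm : m i * m j / |x i - x j| ≤ K := (term_le_Upot' m hm x hij).trans hUle
      rw [div_le_iff₀ habs] at hterm
      rw [div_le_iff₀ hK]
      linarith [hterm]
    · rintro ⟨⟨hmono, hgap⟩, hle⟩
      refine ⟨fun a b hab => ?_, hle⟩
      have h1 : x (σ a) ≤ x (σ b) := hmono a b hab.le
      have h2 : σ a ≠ σ b := fun h => hab.ne (σ.injective h)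
      have h3 := hgap (σ a) (σ b) h2
      have h4 : 0 < m (σ a) * m (σ b) / K := div_pos (mul_pos (hm _) (hm _)) hK
      have h5 : x (σ a) ≠ x (σ b) := by
        intro h
        rw [h, sub_self, abs_zero] at h3
        linarith
      exact lt_of_le_of_ne h1 h5
  -- bounded
  have hbdd : Bornology.IsBounded S := by
    set c := ∑ i, Real.sqrt (K / m i) with hc
    have hc0 : 0 ≤ c := Finset.sum_nonneg fun i _ => Real.sqrt_nonneg _
    apply (Metric.isBounded_closedBall (x := (0 : Fin N → ℝ)) (r := c)).subset
    intro x hx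
    rw [Metric.mem_closedBall, dist_zero_right]
    rw [pi_norm_le_iff_of_nonneg hc0]
    intro i
    have hIle : inertia m x ≤ K := by
      have := Upot_nonneg m hm x
      have := hx.2
      linarith
    have hterm : m i * x i ^ 2 ≤ K := by
      have h1 : m i * x i ^ 2 ≤ inertia m x := by
        apply Finset.single_le_sum (f := fun i => m i * x i ^ 2)
        · intro a _; exact mul_nonneg (hm a).le (sq_nonneg _)
        · simp
      linarith
    have h2 : x i ^ 2 ≤ K / m i := by
      rw [le_div_iff₀ (hm i)]; linarith [hterm]
    have h3 : |x i| ≤ Real.sqrt (K / m i) := by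
      rw [← Real.sqrt_sq_eq_abs]
      exact Real.sqrt_le_sqrt h2
    calc ‖x i‖ = |x i| := rfl
      _ ≤ Real.sqrt (K / m i) := h3
      _ ≤ c := Finset.single_le_sum (f := fun i => Real.sqrt (K / m i))
          (fun a _ => Real.sqrt_nonneg _) (Finset.mem_univ i)
  rw [hSeq] at hbdd ⊢
  exact Metric.isCompact_of_isClosed_isBounded
    (hcont.preimage_isClosed_of_isClosed hCclosed isClosed_Iic) hbdd
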